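/- If x = y, then for every μ ∈ ℰ(A) which is not the point mass on the constant sequence of x's, for μ-a.e. w ∈ A^ℤ, lim_{n→∞} n/|G(w_1…w_n)| = 1/(1 − Σ_{k=2}^{∞} (−1)^k μ(x^k)), where x^k denotes the word consisting of k copies of x. -/

import Mathlib

open MeasureTheory Filter Topology

instance optionMeasurableSpace {A : Type*} [MeasurableSpace A] : MeasurableSpace (Option A) :=
  MeasurableSpace.comap (Option.elim' (Sum.inr ()) Sum.inl : Option A → A ⊕ Unit) inferInstance

/-- Left-to-right non-overlapping substitution of the pair `x y` by a new symbol `none`. -/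
def pairSubst {A : Type*} [DecidableEq A] (x y : A) : List A → List (Option A)
  | [] => []
  | [a] => [some a]
  | a :: b :: l =>
      if a = x ∧ b = y then none :: pairSubst x y l
      else some a :: pairSubst x y (b :: l)

/-- Substitution of every occurrence of `none` by the pair `x y`. -/
def pairExpand {A : Type*} (x y : A) : List (Option A) → List A
  | [] => []
  | none :: l => x :: y :: pairExpand x y l
  | some a :: l => a :: pairExpand x y l

/-- Number of (possibly overlapping) occurrences of `s` as a contiguous subword of `r`. -/
def occ {B : Type*} [DecidableEq B] (s r : List B) : ℕ :=
  (List.range r.length).countP (fun i => decide (s <+: r.drop i))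

/-- The word `w₁ … wₙ` read out of a two-sided sequence. -/
def wordOf {B : Type*} (w : ℤ → B) (n : ℕ) : List B :=
  (List.range n).map (fun i => w (i : ℤ))

/-- The cylinder set determined by a word. -/
def cyl {B : Type*} (s : List B) : Set (ℤ → B) :=
  {x | ∀ i : Fin s.length, x ((i : ℕ) : ℤ) = s.get i}

/-- The shift map on two-sided sequences. -/
def shift {B : Type*} : (ℤ → B) → (ℤ → B) := fun x i => x (i + 1)

/-- The `n`-block entropy of a measure on `B^ℤ` (base-2 logarithms). -/
noncomputable def blockH {B : Type*} [Fintype B] [MeasurableSpace B]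
    (μ : Measure (ℤ → B)) (n : ℕ) : ℝ :=
  -∑ z : Fin n → B,
    (μ {x : ℤ → B | ∀ i : Fin n, x ((i : ℕ) : ℤ) = z i}).toReal *
      Real.logb 2 ((μ {x : ℤ → B | ∀ i : Fin n, x ((i : ℕ) : ℤ) = z i}).toReal)

/-- `k`-Markov property (stated with cross-multiplied conditional probabilities). -/
def IsKMarkov {B : Type*} [MeasurableSpace B] (μ : Measure (ℤ → B)) (k : ℕ) : Prop :=
  ∀ w : List B, k ≤ w.length → μ (cyl w) ≠ 0 → ∀ a : B,
    μ (cyl (w ++ [a])) * μ (cyl (w.drop (w.length - k))) =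
      μ (cyl (w.drop (w.length - k) ++ [a])) * μ (cyl w)

/-!
Greedy substitution turns a maximal run of `r` letters `x` into `⌊r/2⌋` new symbols, so
`|G(u)| = |u| - R(u)`, where `R(u)` counts the positions of `u` at which a run of `x`'s of even
positive length begins. Up to the last run of the word, `R(w₀ … wₙ₋₁)` is the Birkhoff sum under
the shift of the indicator of the set `E` of sequences whose run of `x`'s at `0` has even positive
length, and `μ(E) = Σ_{j ≥ 0} (μ(x^{2j+2}) - μ(x^{2j+3}))` is the alternating series. Birkhoff's
ergodic theorem, obtained from the maximal ergodic theorem, gives `R(w₀ … wₙ₋₁)/n → μ(E)` a.e.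
The last run has length at most `K` plus the number of visits to the cylinder `xᴷ`, whose frequency
`μ(xᴷ)` tends to `0` because an ergodic `μ` other than the point mass on `x^ℤ` gives the sequence
`x x x …` on `ℕ` measure zero. Finally `μ(E) ≤ μ(x) < 1`.
-/

section Words

variable {A : Type*} [DecidableEq A] (x : A)

def leadRun : List A → ℕ
  | [] => 0
  | a :: t => if a = x then leadRun t + 1 else 0

def StartsEvenRun (u : List A) : Prop := Even (leadRun x u) ∧ leadRun x u ≠ 0

instance : DecidablePred (StartsEvenRun x) := fun _ => inferInstanceAs (Decidable (_ ∧ _))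

def evenRunCount : List A → ℕ
  | [] => 0
  | a :: t => (if StartsEvenRun x (a :: t) then 1 else 0) + evenRunCount t

variable {x}

lemma not_startsEvenRun_of_leadRun_le_one {u : List A} (h : leadRun x u ≤ 1) :
    ¬StartsEvenRun x u := by
  rintro ⟨⟨r, hr⟩, h0⟩
  omega

lemma startsEvenRun_cons_cons_self_iff (l : List A) :
    StartsEvenRun x (x :: x :: l) ↔ ¬StartsEvenRun x (x :: l) := by
  simp only [StartsEvenRun, leadRun, if_true]
  simp [Nat.even_add_one]

variable (x) in
/-- A maximal run of `r` letters `x` is replaced by `⌊r/2⌋` copies of `none`, and exactly `⌊r/2⌋`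
of its positions start an even run. -/
theorem length_pairSubst_add_evenRunCount (u : List A) :
    (pairSubst x x u).length + evenRunCount x u = u.length := by
  induction u using pairSubst.induct x x with
  | case1 => simp [pairSubst, evenRunCount]
  | case2 a =>
    have : ¬StartsEvenRun x [a] := not_startsEvenRun_of_leadRun_le_one (by
      simp only [leadRun]; split <;> simp)
    simp [pairSubst, evenRunCount, this]
  | case3 a b l h ih =>
    obtain ⟨ha, hb⟩ := h
    subst a b
    have hpair : (if StartsEvenRun x (x :: x :: l) then 1 else 0) +
        (if StartsEvenRun x (x :: l) then 1 else 0) = 1 := by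
      by_cases hl : StartsEvenRun x (x :: l) <;> simp [startsEvenRun_cons_cons_self_iff, hl]
    rw [pairSubst, if_pos ⟨rfl, rfl⟩, evenRunCount, evenRunCount]
    simp only [List.length_cons]
    omega
  | case4 a b l h ih =>
    have : ¬StartsEvenRun x (a :: b :: l) := not_startsEvenRun_of_leadRun_le_one (by
      simp only [leadRun]; split_ifs <;> simp_all)
    rw [pairSubst, if_neg h, evenRunCount, if_neg this]
    simp only [List.length_cons] at ih ⊢
    omega

end Words

section Birkhoff

variable {α : Type*} {T : α → α} {g : α → ℝ}

/-- `maxBirkhoffSum T g N x = max_{k ≤ N} birkhoffSum T g k x`, computed through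
`M_{N+1} = max 0 (g + M_N ∘ T)`. -/
def maxBirkhoffSum (T : α → α) (g : α → ℝ) : ℕ → α → ℝ
  | 0 => 0
  | N + 1 => fun x => max 0 (g x + maxBirkhoffSum T g N (T x))

lemma maxBirkhoffSum_nonneg (N : ℕ) (x : α) : 0 ≤ maxBirkhoffSum T g N x := by
  cases N with
  | zero => rfl
  | succ N => exact le_max_left _ _

lemma maxBirkhoffSum_le_succ (N : ℕ) (x : α) :
    maxBirkhoffSum T g N x ≤ maxBirkhoffSum T g (N + 1) x := by
  induction N generalizing x with
  | zero => exact maxBirkhoffSum_nonneg _ _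
  | succ N ih => exact max_le_max le_rfl (add_le_add_right (ih (T x)) _)

lemma monotone_maxBirkhoffSum (x : α) : Monotone fun N => maxBirkhoffSum T g N x :=
  monotone_nat_of_le_succ fun N => maxBirkhoffSum_le_succ N x

lemma birkhoffSum_le_maxBirkhoffSum {n N : ℕ} (h : n ≤ N) (x : α) :
    birkhoffSum T g n x ≤ maxBirkhoffSum T g N x := by
  induction n generalizing N x with
  | zero => exact maxBirkhoffSum_nonneg _ _
  | succ n ih =>
    obtain ⟨N, rfl⟩ : ∃ N', N = N' + 1 := ⟨N - 1, by omega⟩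
    rw [birkhoffSum_succ']
    exact (add_le_add_right (ih (by omega) (T x)) _).trans (le_max_right _ _)

lemma maxBirkhoffSum_le_add_comp {N : ℕ} {x : α} (h : 0 < maxBirkhoffSum T g N x) :
    maxBirkhoffSum T g N x ≤ g x + maxBirkhoffSum T g N (T x) := by
  cases N with
  | zero => exact absurd h (lt_irrefl 0)
  | succ N =>
    calc maxBirkhoffSum T g (N + 1) x = g x + maxBirkhoffSum T g N (T x) :=
          max_eq_right (not_lt.1 fun h' => h.ne' (max_eq_left h'.le))
      _ ≤ g x + maxBirkhoffSum T g (N + 1) (T x) :=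
          add_le_add_right (maxBirkhoffSum_le_succ _ _) _

lemma bddAbove_range_birkhoffSum_comp_iff (x : α) :
    BddAbove (Set.range fun n => birkhoffSum T g n (T x)) ↔
      BddAbove (Set.range fun n => birkhoffSum T g n x) := by
  simp only [bddAbove_def, Set.forall_mem_range]
  constructor
  · rintro ⟨C, hC⟩
    refine ⟨max 0 (g x + C), fun n => ?_⟩
    cases n with
    | zero => exact le_max_left _ _
    | succ n =>
      rw [birkhoffSum_succ']
      exact (add_le_add_right (hC n) _).trans (le_max_right _ _)
  · rintro ⟨C, hC⟩
    exact ⟨C - g x, fun n => by linarith [hC (n + 1), birkhoffSum_succ' T g n x]⟩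

lemma birkhoffAverage_eq_birkhoffSum_div (n : ℕ) (x : α) :
    birkhoffAverage ℝ T g n x = birkhoffSum T g n x / n := by
  rw [birkhoffAverage, smul_eq_mul, inv_mul_eq_div]

variable [MeasurableSpace α] {μ : Measure α}

lemma measurable_maxBirkhoffSum (hT : Measurable T) (hg : Measurable g) (N : ℕ) :
    Measurable (maxBirkhoffSum T g N) := by
  induction N with
  | zero => exact measurable_const
  | succ N ih => exact measurable_const.max (hg.add (ih.comp hT))

lemma integrable_maxBirkhoffSum (hT : MeasurePreserving T μ μ) (hg : Integrable g μ) (N : ℕ) :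
    Integrable (maxBirkhoffSum T g N) μ := by
  induction N with
  | zero => exact integrable_zero _ _ _
  | succ N ih => exact (integrable_zero _ _ _).sup (hg.add (hT.integrable_comp_of_integrable ih))

theorem MeasureTheory.MeasurePreserving.setIntegral_maxBirkhoffSum_pos_nonneg
    (hT : MeasurePreserving T μ μ) (hgm : Measurable g) (hg : Integrable g μ) (N : ℕ) :
    0 ≤ ∫ x in {x | 0 < maxBirkhoffSum T g N x}, g x ∂μ := by
  set M := maxBirkhoffSum T g N
  have hs : MeasurableSet {x | 0 < M x} :=
    measurableSet_lt measurable_const (measurable_maxBirkhoffSum hT.measurable hgm N)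
  have hM : Integrable M μ := integrable_maxBirkhoffSum hT hg N
  have hMT : Integrable (fun x => M (T x)) μ := hT.integrable_comp_of_integrable hM
  have hM_eq : ∫ x in {x | 0 < M x}, M x ∂μ = ∫ x, M x ∂μ :=
    setIntegral_eq_integral_of_forall_compl_eq_zero fun x hx =>
      le_antisymm (not_lt.1 hx) (maxBirkhoffSum_nonneg N x)
  have hMT_le : ∫ x in {x | 0 < M x}, M (T x) ∂μ ≤ ∫ x, M (T x) ∂μ :=
    setIntegral_le_integral hMT (.of_forall fun x => maxBirkhoffSum_nonneg N (T x))
  have hMT_eq : ∫ x, M (T x) ∂μ = ∫ x, M x ∂μ := by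
    rw [← integral_map hT.measurable.aemeasurable
      (measurable_maxBirkhoffSum hT.measurable hgm N).aestronglyMeasurable, hT.map_eq]
  calc (0 : ℝ) ≤ ∫ x in {x | 0 < M x}, M x ∂μ - ∫ x in {x | 0 < M x}, M (T x) ∂μ := by
        linarith
    _ = ∫ x in {x | 0 < M x}, (M x - M (T x)) ∂μ :=
        (integral_sub hM.integrableOn hMT.integrableOn).symm
    _ ≤ ∫ x in {x | 0 < M x}, g x ∂μ :=
        setIntegral_mono_on (hM.sub hMT).integrableOn hg.integrableOn hs fun x hx => by
          linarith [maxBirkhoffSum_le_add_comp (T := T) (g := g) hx]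

lemma measurable_birkhoffSum (hT : Measurable T) (hg : Measurable g) (n : ℕ) :
    Measurable (birkhoffSum T g n) :=
  Finset.measurable_sum _ fun k _ => hg.comp (hT.iterate k)

/-- Ergodicity makes the event "the Birkhoff sums stay bounded above" trivial; if it failed almost
everywhere, the sets where some `maxBirkhoffSum` is positive would exhaust the space and the maximal
ergodic theorem would give `0 ≤ ∫ g`. -/
theorem Ergodic.ae_bddAbove_birkhoffSum (hT : Ergodic T μ) (hgm : Measurable g)
    (hg : Integrable g μ) (hneg : ∫ x, g x ∂μ < 0) :
    ∀ᵐ x ∂μ, BddAbove (Set.range fun n => birkhoffSum T g n x) := by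
  have hs : MeasurableSet {x | BddAbove (Set.range fun n => birkhoffSum T g n x)} :=
    measurableSet_bddAbove_range fun n => measurable_birkhoffSum hT.measurable hgm n
  have hinv : T ⁻¹' {x | BddAbove (Set.range fun n => birkhoffSum T g n x)} =
      {x | BddAbove (Set.range fun n => birkhoffSum T g n x)} :=
    Set.ext bddAbove_range_birkhoffSum_comp_iff
  refine (hT.ae_mem_or_ae_notMem hs hinv).resolve_right fun hunb => hneg.not_ge ?_
  have hcover : ∀ᵐ x ∂μ, x ∈ ⋃ N, {x | 0 < maxBirkhoffSum T g N x} := by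
    filter_upwards [hunb] with x hx
    obtain ⟨n, hn⟩ := not_bddAbove_iff.1 hx 0
    obtain ⟨n, rfl⟩ := hn.1
    exact Set.mem_iUnion.2 ⟨n, hn.2.trans_le (birkhoffSum_le_maxBirkhoffSum le_rfl x)⟩
  have hmono : Monotone fun N => {x | 0 < maxBirkhoffSum T g N x} :=
    fun _ _ hNM _ hx => hx.trans_le (monotone_maxBirkhoffSum _ hNM)
  have hlim := tendsto_setIntegral_of_monotone (μ := μ)
    (fun N => measurableSet_lt measurable_const
      (measurable_maxBirkhoffSum hT.measurable hgm N)) hmono hg.integrableOn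
  rw [Measure.restrict_eq_self_of_ae_mem hcover] at hlim
  exact ge_of_tendsto' hlim fun N =>
    hT.toMeasurePreserving.setIntegral_maxBirkhoffSum_pos_nonneg hgm hg N

theorem Ergodic.ae_eventually_birkhoffAverage_lt [IsProbabilityMeasure μ] (hT : Ergodic T μ)
    (hgm : Measurable g) (hg : Integrable g μ) :
    ∀ᵐ x ∂μ, ∀ a, ∫ x, g x ∂μ < a → ∀ᶠ n in atTop, birkhoffAverage ℝ T g n x < a := by
  have hbdd : ∀ᵐ x ∂μ, ∀ q : ℚ, ∫ x, g x ∂μ < q →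
      BddAbove (Set.range fun n => birkhoffSum T (g - fun _ => (q : ℝ)) n x) := by
    refine ae_all_iff.2 fun q => ?_
    by_cases hq : ∫ x, g x ∂μ < q
    · filter_upwards [hT.ae_bddAbove_birkhoffSum (hgm.sub measurable_const)
        (hg.sub (integrable_const _)) (by simpa [integral_sub hg (integrable_const _)] using hq)]
        with x hx using fun _ => hx
    · exact .of_forall fun x hq' => absurd hq' hq
  filter_upwards [hbdd] with x hx a ha
  obtain ⟨q, hgq, hqa⟩ := exists_rat_btwn ha
  obtain ⟨C, hC⟩ := hx q hgq
  have hS : ∀ n : ℕ, birkhoffSum T g n x ≤ n * q + C := fun n => by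
    have hCn : birkhoffSum T (g - fun _ => (q : ℝ)) n x ≤ C := hC ⟨n, rfl⟩
    have hconst : birkhoffSum T (fun _ => (q : ℝ)) n x = n * q := by simp [birkhoffSum]
    rw [birkhoffSum_sub, hconst] at hCn
    linarith
  have hlim : Tendsto (fun n : ℕ => (q : ℝ) + C / n) atTop (𝓝 q) := by
    simpa using tendsto_const_nhds.add (tendsto_const_div_atTop_nhds_zero_nat C)
  filter_upwards [hlim.eventually (gt_mem_nhds hqa), eventually_gt_atTop 0] with n hn hn0
  have hn0' : (0 : ℝ) < n := Nat.cast_pos.2 hn0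
  calc birkhoffAverage ℝ T g n x = birkhoffSum T g n x / n :=
        birkhoffAverage_eq_birkhoffSum_div n x
    _ ≤ q + C / n := by
        rw [div_le_iff₀ hn0', add_mul, div_mul_cancel₀ _ hn0'.ne']
        linarith [hS n]
    _ < a := hn

theorem Ergodic.ae_tendsto_birkhoffAverage [IsProbabilityMeasure μ] (hT : Ergodic T μ)
    (hgm : Measurable g) (hg : Integrable g μ) :
    ∀ᵐ x ∂μ, Tendsto (fun n => birkhoffAverage ℝ T g n x) atTop (𝓝 (∫ x, g x ∂μ)) := by
  filter_upwards [hT.ae_eventually_birkhoffAverage_lt hgm hg,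
    hT.ae_eventually_birkhoffAverage_lt hgm.neg hg.neg] with x hup hlow
  refine tendsto_order.2 ⟨fun a ha => ?_, hup⟩
  filter_upwards [hlow (-a) (by simp only [Pi.neg_apply, integral_neg]; linarith)] with n hn
  simp only [birkhoffAverage_neg, Pi.neg_apply] at hn
  linarith

theorem Ergodic.ae_tendsto_birkhoffSum_indicator_div [IsProbabilityMeasure μ] (hT : Ergodic T μ)
    {s : Set α} (hs : MeasurableSet s) :
    ∀ᵐ x ∂μ, Tendsto (fun n : ℕ => birkhoffSum T (s.indicator (1 : α → ℝ)) n x / n) atTop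
      (𝓝 (μ.real s)) := by
  filter_upwards [hT.ae_tendsto_birkhoffAverage (measurable_one.indicator hs)
    ((integrable_const 1).indicator hs)] with x hx
  simpa only [birkhoffAverage_eq_birkhoffSum_div, integral_indicator_one hs] using hx

end Birkhoff

section AlternatingSum

variable {α : Type*} {s : ℕ → Set α}

lemma pairwise_disjoint_sdiff_even_odd (hs : Antitone s) :
    Pairwise (Function.onFun Disjoint fun j => s (2 * j) \ s (2 * j + 1)) := by
  refine (pairwise_disjoint_on _).2 fun i j hij => Set.disjoint_left.2 ?_
  rintro y ⟨-, hyi⟩ ⟨hyj, -⟩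
  exact hyi (hs (by omega) hyj)

variable [MeasurableSpace α] {μ : Measure α} [IsFiniteMeasure μ]

theorem tendsto_sum_neg_one_pow_mul_measureReal (hsm : ∀ n, MeasurableSet (s n))
    (hs : Antitone s) (h0 : Tendsto (fun n => μ.real (s n)) atTop (𝓝 0)) :
    Tendsto (fun m => ∑ k ∈ Finset.range m, (-1) ^ k * μ.real (s k)) atTop
      (𝓝 (μ.real (⋃ j, s (2 * j) \ s (2 * j + 1)))) := by
  obtain ⟨l, hl⟩ := Antitone.tendsto_alternating_series_of_tendsto_zero
    (fun _ _ h => measureReal_mono (hs h)) h0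
  have hlayer : ∀ j,
      μ.real (s (2 * j) \ s (2 * j + 1)) = μ.real (s (2 * j)) - μ.real (s (2 * j + 1)) :=
    fun j => measureReal_sdiff (hs (Nat.le_succ _)) (hsm _)
  have hpair : ∀ J, ∑ k ∈ Finset.range (2 * J), (-1) ^ k * μ.real (s k) =
      ∑ j ∈ Finset.range J, μ.real (s (2 * j) \ s (2 * j + 1)) := by
    intro J
    induction J with
    | zero => simp
    | succ J ih =>
      rw [Nat.mul_succ, Finset.sum_range_succ, Finset.sum_range_succ, Finset.sum_range_succ, ih,
        hlayer, pow_succ, (even_two_mul J).neg_one_pow]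
      ring
  have hunion : Tendsto (fun J => ∑ j ∈ Finset.range J, μ.real (s (2 * j) \ s (2 * j + 1))) atTop
      (𝓝 (μ.real (⋃ j, s (2 * j) \ s (2 * j + 1)))) := by
    have hU := measure_iUnion (μ := μ) (pairwise_disjoint_sdiff_even_odd hs)
      fun j => (hsm _).diff (hsm _)
    refine ((ENNReal.tendsto_toReal (measure_ne_top μ _)).comp
      (hU ▸ ENNReal.tendsto_nat_tsum _)).congr fun J => ?_
    exact ENNReal.toReal_sum fun _ _ => measure_ne_top μ _
  have heven := hl.comp (strictMono_mul_left_of_pos two_pos).tendsto_atTop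
  rw [tendsto_nhds_unique heven (hunion.congr fun J => (hpair J).symm)] at hl
  exact hl

end AlternatingSum

section Sequences

variable {B : Type*}

lemma mem_cyl_replicate {x : B} {m : ℕ} {w : ℤ → B} :
    w ∈ cyl (List.replicate m x) ↔ ∀ k < m, w k = x := by
  simp [cyl, Fin.forall_iff]

lemma antitone_cyl_replicate (x : B) : Antitone fun m => cyl (List.replicate m x) :=
  fun _ _ hmn _ hw => mem_cyl_replicate.2 fun k hk => mem_cyl_replicate.1 hw k (by omega)

lemma measurableSet_cyl [MeasurableSpace B] [MeasurableSingletonClass B] (s : List B) :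
    MeasurableSet (cyl s) := by
  simp only [cyl, Set.ofPred_forall]
  exact MeasurableSet.iInter fun i => measurable_pi_apply _ (measurableSet_singleton _)

/-- In `wordOf` the coercion `ℕ → ℤ` is applied to the list `List.range n` itself. -/
lemma wordOf_eq_map (w : ℤ → B) (n : ℕ) : wordOf w n = (List.range n).map fun i : ℕ => w i := by
  simp [wordOf, ← List.map_eq_flatMap]

lemma wordOf_succ (w : ℤ → B) (n : ℕ) : wordOf w (n + 1) = w 0 :: wordOf (shift w) n := by
  simp [wordOf_eq_map, List.range_succ_eq_map, shift]

lemma length_wordOf (w : ℤ → B) (n : ℕ) : (wordOf w n).length = n := by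
  simp [wordOf]

end Sequences

section EvenRuns

variable {A : Type*} {x : A} {w : ℤ → A} {m : ℕ}

lemma forall_lt_apply_eq_iff (hrun : ∀ k < m, w k = x) (hm : w m ≠ x) {n : ℕ} :
    (∀ k < n, w k = x) ↔ n ≤ m :=
  ⟨fun h => not_lt.1 fun hmn => hm (h m hmn), fun h k hk => hrun k (by omega)⟩

variable (x) in
def evenRunSet : Set (ℤ → A) :=
  ⋃ j : ℕ, cyl (List.replicate (2 * j + 2) x) \ cyl (List.replicate (2 * j + 3) x)

lemma measurableSet_evenRunSet [MeasurableSpace A] [MeasurableSingletonClass A] :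
    MeasurableSet (evenRunSet x) :=
  MeasurableSet.iUnion fun _ => (measurableSet_cyl _).diff (measurableSet_cyl _)

lemma mem_evenRunSet_iff (hrun : ∀ k < m, w k = x) (hm : w m ≠ x) :
    w ∈ evenRunSet x ↔ Even m ∧ m ≠ 0 := by
  simp only [evenRunSet, Set.mem_iUnion, Set.mem_sdiff, mem_cyl_replicate,
    forall_lt_apply_eq_iff hrun hm, not_le]
  constructor
  · rintro ⟨j, h1, h2⟩
    exact ⟨⟨j + 1, by omega⟩, by omega⟩
  · rintro ⟨⟨r, hr⟩, h0⟩
    exact ⟨r - 1, by omega, by omega⟩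

lemma evenRunSet_subset_apply_zero_eq : evenRunSet x ⊆ {v | v 0 = x} := fun v hv => by
  obtain ⟨j, hj, -⟩ := Set.mem_iUnion.1 hv
  simpa using mem_cyl_replicate.1 hj 0 (by omega)

variable [DecidableEq A]

lemma leadRun_wordOf (hrun : ∀ k < m, w k = x) (hm : w m ≠ x) {n : ℕ} (hmn : m < n) :
    leadRun x (wordOf w n) = m := by
  obtain ⟨n, rfl⟩ := Nat.exists_eq_add_of_lt hmn
  induction m generalizing w n with
  | zero => rw [zero_add, wordOf_succ, leadRun, if_neg (by simpa using hm)]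
  | succ m ih =>
    rw [show m + 1 + n + 1 = m + n + 1 + 1 by omega, wordOf_succ, leadRun,
      if_pos (by simpa using hrun 0 (by omega)), ih (w := shift w)]
    · exact fun k hk => by simpa [shift] using hrun (k + 1) (by omega)
    · simpa [shift] using hm
    · omega

lemma startsEvenRun_wordOf_iff {n : ℕ} (h : ∃ k < n, w k ≠ x) :
    StartsEvenRun x (wordOf w n) ↔ w ∈ evenRunSet x := by
  have hex : ∃ k : ℕ, w k ≠ x := h.imp fun _ => And.right
  have hrun : ∀ k < Nat.find hex, w k = x := fun k hk => not_not.1 (Nat.find_min hex hk)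
  obtain ⟨k, hkn, hk⟩ := h
  rw [StartsEvenRun,
    leadRun_wordOf hrun (Nat.find_spec hex) ((Nat.find_min' hex hk).trans_lt hkn),
    mem_evenRunSet_iff hrun (Nat.find_spec hex)]

/-- The word `w₀ … wₙ₋₁` sees the run of `x`'s at position `0` correctly unless the run reaches
the end of the word, which forces `w ∈ cyl (xᴷ)` as soon as `K ≤ n`. -/
lemma abs_ite_startsEvenRun_sub_indicator_le {n K : ℕ} (hK : K ≤ n) :
    |(if StartsEvenRun x (wordOf w n) then 1 else 0 : ℝ) - (evenRunSet x).indicator 1 w| ≤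
      (cyl (List.replicate K x)).indicator 1 w := by
  classical
  by_cases h : ∃ k < n, w k ≠ x
  · rw [if_congr (startsEvenRun_wordOf_iff h) rfl rfl, Set.indicator_apply, Pi.one_apply, sub_self,
      abs_zero]
    exact Set.indicator_nonneg (fun _ _ => zero_le_one) w
  · push Not at h
    rw [Set.indicator_of_mem (mem_cyl_replicate.2 fun k hk => h k (by omega)),
      Set.indicator_apply]
    split_ifs <;> norm_num

lemma abs_evenRunCount_wordOf_sub_birkhoffSum_le (w : ℤ → A) (n K : ℕ) :
    |(evenRunCount x (wordOf w n) : ℝ) - birkhoffSum shift ((evenRunSet x).indicator 1) n w| ≤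
      min n K + birkhoffSum shift ((cyl (List.replicate K x)).indicator 1) n w := by
  induction n generalizing w with
  | zero => simp [wordOf, evenRunCount]
  | succ n ih =>
    classical
    have hC : 0 ≤ (cyl (List.replicate K x)).indicator (1 : (ℤ → A) → ℝ) w :=
      Set.indicator_nonneg (fun _ _ => zero_le_one) w
    have hstep : |(if StartsEvenRun x (wordOf w (n + 1)) then 1 else 0 : ℝ) -
        (evenRunSet x).indicator 1 w| ≤
          (cyl (List.replicate K x)).indicator 1 w + (min ((n : ℝ) + 1) K - min (n : ℝ) K) := by
      by_cases hK : K ≤ n + 1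
      · refine (abs_ite_startsEvenRun_sub_indicator_le hK).trans (le_add_of_nonneg_right ?_)
        exact sub_nonneg.2 (min_le_min_right _ (by linarith))
      · have hK' : (n : ℝ) + 1 ≤ K := by exact_mod_cast (not_le.1 hK).le
        rw [min_eq_left hK', min_eq_left (by linarith), Set.indicator_apply]
        split_ifs <;> norm_num <;> linarith
    rw [wordOf_succ, evenRunCount, ← wordOf_succ, birkhoffSum_succ', birkhoffSum_succ']
    push_cast at ih ⊢
    rw [add_sub_add_comm]
    refine (abs_add_le _ _).trans ?_
    linarith [ih (shift w)]

end EvenRuns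

section ShiftInvariant

variable {A : Type*} [MeasurableSpace A] [MeasurableSingletonClass A] {x : A}
  {μ : Measure (ℤ → A)} [IsProbabilityMeasure μ]

lemma measurableSet_apply_eq (i : ℤ) : MeasurableSet {w : ℤ → A | w i = x} :=
  (measurableSet_singleton x).preimage (measurable_pi_apply i)

theorem eq_dirac_of_measure_apply_zero_eq_one (hμ : MeasurePreserving shift μ μ)
    (h : μ {w | w 0 = x} = 1) : μ = Measure.dirac fun _ => x := by
  have hstep : ∀ i : ℤ, μ {w : ℤ → A | w (i + 1) = x} = μ {w | w i = x} := fun i =>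
    hμ.measure_preimage (measurableSet_apply_eq i).nullMeasurableSet
  have hall : ∀ i : ℤ, μ {w : ℤ → A | w i = x} = 1 := by
    intro i
    induction i using Int.induction_on with
    | zero => exact h
    | succ i ih => rwa [hstep]
    | pred i ih => rwa [← hstep, sub_add_cancel]
  have hae : ∀ᵐ w ∂μ, w ∈ ({fun _ => x} : Set (ℤ → A)) := by
    have hcoord : ∀ᵐ w ∂μ, ∀ i, w i = x := ae_all_iff.2 fun i =>
      (ae_iff_measure_eq (measurableSet_apply_eq i).nullMeasurableSet).2 <| by
        rw [hall, measure_univ]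
    filter_upwards [hcoord] with w hw using funext hw
  have h1 : μ {fun _ => x} = 1 := by
    rw [← measure_univ (μ := μ)]
    exact (ae_iff_measure_eq (measurableSet_singleton _).nullMeasurableSet).1 hae
  rw [← Measure.restrict_eq_self_of_ae_mem hae, Measure.restrict_singleton, h1, one_smul]

lemma measure_apply_zero_lt_one (hμ : Ergodic shift μ) (hne : μ ≠ Measure.dirac fun _ => x) :
    μ {w | w 0 = x} < 1 :=
  prob_le_one.lt_of_ne fun h => hne (eq_dirac_of_measure_apply_zero_eq_one hμ.toMeasurePreserving h)

theorem tendsto_measure_cyl_replicate (hμ : Ergodic shift μ)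
    (hne : μ ≠ Measure.dirac fun _ => x) :
    Tendsto (fun m => μ (cyl (List.replicate m x))) atTop (𝓝 0) := by
  set s : Set (ℤ → A) := {w | ∀ k : ℕ, w k = x}
  have hs : ⋂ m, cyl (List.replicate m x) = s := by
    ext w
    simp only [Set.mem_iInter, mem_cyl_replicate]
    exact ⟨fun h k => h (k + 1) k k.lt_succ_self, fun h _ k _ => h k⟩
  have hsm : MeasurableSet s := by
    rw [← hs]
    exact MeasurableSet.iInter fun _ => measurableSet_cyl _
  have hinv : s ≤ᵐ[μ] shift ⁻¹' s :=
    Eventually.of_forall fun w hw k => by simpa [shift] using hw (k + 1)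
  have hs0 : μ s = 0 := by
    rcases hμ.ae_empty_or_univ_of_ae_le_preimage' hsm.nullMeasurableSet hinv
      (measure_ne_top μ s) with hempty | huniv
    · exact ae_eq_empty.1 hempty
    · refine absurd ?_ (measure_apply_zero_lt_one hμ hne).not_ge
      calc (1 : ENNReal) = μ s := by rw [measure_congr huniv, measure_univ]
        _ ≤ μ {w | w 0 = x} := measure_mono fun w hw => by simpa using hw 0
  have := tendsto_measure_iInter_atTop (μ := μ) (fun m => (measurableSet_cyl _).nullMeasurableSet)
    (antitone_cyl_replicate x) ⟨0, measure_ne_top μ _⟩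
  rwa [hs, hs0] at this

end ShiftInvariant

lemma tendsto_div_of_abs_sub_le {a b : ℕ → ℝ} {c : ℕ → ℕ → ℝ} {ε : ℕ → ℝ} {L : ℝ}
    (hb : Tendsto (fun n : ℕ => b n / n) atTop (𝓝 L))
    (hc : ∀ K, Tendsto (fun n : ℕ => c K n / n) atTop (𝓝 (ε K)))
    (hε : Tendsto ε atTop (𝓝 0)) (hab : ∀ K n, |a n - b n| ≤ K + c K n) :
    Tendsto (fun n : ℕ => a n / n) atTop (𝓝 L) := by
  have hdiff : Tendsto (fun n : ℕ => a n / n - b n / n) atTop (𝓝 0) := by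
    refine Metric.tendsto_nhds.2 fun δ hδ => ?_
    obtain ⟨K, hK⟩ := (hε.eventually (gt_mem_nhds (by positivity : (0 : ℝ) < δ / 3))).exists
    filter_upwards [(hc K).eventually (gt_mem_nhds (by linarith : ε K < 2 * δ / 3)),
      (tendsto_const_div_atTop_nhds_zero_nat (K : ℝ)).eventually
        (gt_mem_nhds (by positivity : (0 : ℝ) < δ / 3)),
      eventually_gt_atTop 0] with n hcn hKn hn
    have hn' : (0 : ℝ) < n := Nat.cast_pos.2 hn
    rw [Real.dist_eq, sub_zero, ← sub_div, abs_div, abs_of_pos hn', div_lt_iff₀ hn']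
    rw [div_lt_iff₀ hn'] at hcn hKn
    linarith [hab K n]
  simpa using hdiff.add hb

section PairSubst

variable {A : Type*} [DecidableEq A] {x : A}

lemma tendsto_div_length_pairSubst {u : ℕ → List A} (hu : ∀ n, (u n).length = n) {L : ℝ}
    (h : Tendsto (fun n : ℕ => (evenRunCount x (u n) : ℝ) / n) atTop (𝓝 L)) (hL : L ≠ 1) :
    Tendsto (fun n : ℕ => (n : ℝ) / (pairSubst x x (u n)).length) atTop (𝓝 (1 / (1 - L))) := by
  have hlen : ∀ n : ℕ, ((pairSubst x x (u n)).length : ℝ) = n - evenRunCount x (u n) := fun n => by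
    have := length_pairSubst_add_evenRunCount x (u n)
    rw [hu] at this
    rw [eq_sub_iff_add_eq]
    exact_mod_cast this
  have hratio : Tendsto (fun n => ((pairSubst x x (u n)).length : ℝ) / n) atTop (𝓝 (1 - L)) := by
    refine (tendsto_const_nhds.sub h).congr' ?_
    filter_upwards [eventually_gt_atTop 0] with n hn
    rw [hlen, sub_div, div_self (Nat.cast_ne_zero.2 hn.ne')]
  rw [one_div]
  exact (hratio.inv₀ (sub_ne_zero.2 hL.symm)).congr fun n => inv_div _ _

end PairSubst

theorem stmt_5_general {A : Type*} [DecidableEq A] [MeasurableSpace A]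
    [MeasurableSingletonClass A]
    (x : A) (μ : Measure (ℤ → A)) [IsProbabilityMeasure μ] (hμ : Ergodic shift μ)
    (hne : μ ≠ Measure.dirac (fun _ : ℤ => x)) :
    ∃ L : ℝ,
      Tendsto
        (fun m : ℕ => ∑ k ∈ Finset.range m,
          (-1 : ℝ) ^ (k + 2) * (μ (cyl (List.replicate (k + 2) x))).toReal)
        atTop (𝓝 L) ∧
      ∀ᵐ w ∂μ, Tendsto
        (fun n : ℕ => (n : ℝ) / ((pairSubst x x (wordOf w n)).length : ℝ))
        atTop (𝓝 (1 / (1 - L))) := by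
  have hC : Tendsto (fun m => μ.real (cyl (List.replicate m x))) atTop (𝓝 0) :=
    (ENNReal.tendsto_toReal ENNReal.zero_ne_top).comp (tendsto_measure_cyl_replicate hμ hne)
  have hL : μ.real (evenRunSet x) ≠ 1 := by
    refine (ENNReal.toReal_lt_of_lt_ofReal ?_).ne
    rw [ENNReal.ofReal_one]
    exact (measure_mono evenRunSet_subset_apply_zero_eq).trans_lt
      (measure_apply_zero_lt_one hμ hne)
  refine ⟨μ.real (evenRunSet x), ?_, ?_⟩
  · have hseries : Tendsto (fun m => ∑ k ∈ Finset.range m,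
        (-1) ^ k * μ.real (cyl (List.replicate (k + 2) x))) atTop (𝓝 (μ.real (evenRunSet x))) :=
      tendsto_sum_neg_one_pow_mul_measureReal (fun _ => measurableSet_cyl _)
        (fun _ _ h => antitone_cyl_replicate x (Nat.add_le_add_right h 2))
        (hC.comp (tendsto_add_atTop_nat 2))
    simpa [pow_add, measureReal_def] using hseries
  · filter_upwards [hμ.ae_tendsto_birkhoffSum_indicator_div measurableSet_evenRunSet,
      ae_all_iff.2 fun K => hμ.ae_tendsto_birkhoffSum_indicator_div
        (measurableSet_cyl (List.replicate K x))] with w hwE hwK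
    exact tendsto_div_length_pairSubst (length_wordOf w)
      (tendsto_div_of_abs_sub_le hwE hwK hC fun K n =>
        (abs_evenRunCount_wordOf_sub_birkhoffSum_le w n K).trans
          (add_le_add_left (Nat.cast_le.2 (min_le_right n K)) _)) hL

/-- for `x = y` and `μ` not the point mass on the constant sequence of `x`'s,
`μ`-a.e. `n/|G(w₁…wₙ)| → 1/(1 − Σ_{k≥2} (−1)ᵏ μ(xᵏ))`, the alternating series being
understood as the limit `L` of its partial sums. -/
theorem stmt_5 {A : Type*} [Fintype A] [DecidableEq A] [MeasurableSpace A]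
    [MeasurableSingletonClass A]
    (x : A) (μ : Measure (ℤ → A)) [IsProbabilityMeasure μ] (hμ : Ergodic shift μ)
    (hne : μ ≠ Measure.dirac (fun _ : ℤ => x)) :
    ∃ L : ℝ,
      Tendsto
        (fun m : ℕ => ∑ k ∈ Finset.range m,
          (-1 : ℝ) ^ (k + 2) * (μ (cyl (List.replicate (k + 2) x))).toReal)
        atTop (𝓝 L) ∧
      ∀ᵐ w ∂μ, Tendsto
        (fun n : ℕ => (n : ℝ) / ((pairSubst x x (wordOf w n)).length : ℝ))
        atTop (𝓝 (1 / (1 - L))) :=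
  stmt_5_general x μ hμ hne
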